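/- arXiv:2308.08819 — 2 statements merged into one kernel-verified Lean document; each statement's English description precedes it below -/
import Mathlib

section
/- For each dyadic δ-tube T and each dyadic Δ with 30δ < Δ, one has (6T)^{(Δ)} ∩ [−1,2)² ⊂ 6(T^Δ). Here (6T)^{(Δ)} is the Δ-neighborhood of the 6δ-neighborhood of T, and T^Δ is the dyadic Δ-tube containing T. -/
open Set Metric
open scoped Classical

noncomputable section

/-- The half-open dyadic square of side-length `δ` with index `q`. -/
def dSq (δ : ℝ) (q : ℤ × ℤ) : Set (ℝ × ℝ) :=
  Set.Ico ((q.1 : ℝ) * δ) (((q.1 : ℝ) + 1) * δ) ×ˢ Set.Ico ((q.2 : ℝ) * δ) (((q.2 : ℝ) + 1) * δ)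

/-- The dyadic `δ`-covering number of a planar set. -/
def covNum (δ : ℝ) (P : Set (ℝ × ℝ)) : ℕ :=
  Nat.card {q : ℤ × ℤ | (dSq δ q ∩ P).Nonempty}

/-- The dyadic `δ`-covering number of a set of reals. -/
def covNum1 (δ : ℝ) (A : Set ℝ) : ℕ :=
  Nat.card {k : ℤ | (Set.Ico ((k : ℝ) * δ) (((k : ℝ) + 1) * δ) ∩ A).Nonempty}

/-- `A` is a `(δ, s, C)`-set in the plane. -/
def IsDSSet (δ s C : ℝ) (A : Set (ℝ × ℝ)) : Prop :=
  ∀ (x : ℝ × ℝ) (r : ℝ), δ ≤ r → r ≤ 1 →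
    (covNum δ (A ∩ Metric.ball x r) : ℝ) ≤ C * r ^ s * (covNum δ A : ℝ)

/-- The line `y = a x + b`, dual to the point `(a, b)`. -/
def dualLine (a b : ℝ) : Set (ℝ × ℝ) := {z : ℝ × ℝ | z.2 = a * z.1 + b}

/-- The dyadic `δ`-tube `D(p)`, the union of the lines dual to points of the
dyadic `δ`-square with index `q`. -/
def dTube (δ : ℝ) (q : ℤ × ℤ) : Set (ℝ × ℝ) :=
  {z : ℝ × ℝ | ∃ ab ∈ dSq δ q, z.2 = ab.1 * z.1 + ab.2}

/-- The dyadic square with index `q` is contained in `[0,1)²`. -/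
def sqInUnit (δ : ℝ) (q : ℤ × ℤ) : Prop :=
  dSq δ q ⊆ Set.Ico (0 : ℝ) 1 ×ˢ Set.Ico (0 : ℝ) 1

/-- The dyadic `δ`-square with index `q` is contained in `[−1,1] × ℝ`, so that
`dTube δ q` is a legitimate dyadic `δ`-tube. -/
def tubeIdx (δ : ℝ) (q : ℤ × ℤ) : Prop :=
  (-1 : ℝ) ≤ (q.1 : ℝ) * δ ∧ ((q.1 : ℝ) + 1) * δ ≤ 1

/-- Index of the dyadic parent square/tube, when the scale is multiplied by `S`. -/
def parQ (S : ℤ) (q : ℤ × ℤ) : ℤ × ℤ := (Int.fdiv q.1 S, Int.fdiv q.2 S)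

/-- The `c·ρ`-neighbourhood of the dyadic `ρ`-tube with index `q`; `c = 6` gives `6T`
and `c = 4` gives `4T`. -/
def nbTube (c ρ : ℝ) (q : ℤ × ℤ) : Set (ℝ × ℝ) :=
  Metric.cthickening (c * ρ) (dTube ρ q)

/-- The union of the dyadic `δ`-squares indexed by a finite set. -/
def sqUnion (δ : ℝ) (P : Finset (ℤ × ℤ)) : Set (ℝ × ℝ) := ⋃ p ∈ P, dSq δ p

/-- `(𝒫, 𝒯)` is a `(δ, s, C, M)`-nice configuration: every `p ∈ 𝒫` carries a
`(δ, s, C)`-set `𝒯(p) ⊆ 𝒯` of tubes meeting `p`, with `|𝒯(p)| ∼ M`. -/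
def NiceConfig (δ s C : ℝ) (M : ℕ) (P T : Finset (ℤ × ℤ))
    (Tp : ℤ × ℤ → Finset (ℤ × ℤ)) : Prop :=
  (∀ p ∈ P, sqInUnit δ p) ∧ (∀ t ∈ T, tubeIdx δ t) ∧
  ∀ p ∈ P, Tp p ⊆ T ∧ IsDSSet δ s C (sqUnion δ (Tp p)) ∧
    (M : ℝ) ≤ 2 * ((Tp p).card : ℝ) ∧ ((Tp p).card : ℝ) ≤ 2 * (M : ℝ) ∧
    ∀ t ∈ Tp p, (dTube δ t ∩ dSq δ p).Nonempty


/-! Since `T ⊆ T^Δ`, and the `Δ`-neighbourhood of the `6δ`-neighbourhood of `T` lies in its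
`(Δ + 6δ)`-neighbourhood, it suffices that `Δ + 6δ ≤ 6Δ`, which holds as soon as `6δ ≤ 5Δ`. -/

lemma Ico_subset_Ico_fdiv {δ : ℝ} (hδ : 0 ≤ δ) {S : ℤ} (hS : 0 < S) (k : ℤ) :
    Ico ((k : ℝ) * δ) ((k + 1) * δ) ⊆
      Ico ((Int.fdiv k S : ℝ) * (S * δ)) ((Int.fdiv k S + 1) * (S * δ)) := by
  rw [Int.fdiv_eq_ediv_of_nonneg _ hS.le]
  have hlo : ((k / S : ℤ) : ℝ) * S ≤ k := by exact_mod_cast Int.ediv_mul_le k hS.ne'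
  have hhi : (k : ℝ) + 1 ≤ ((k / S : ℤ) + 1) * S := by
    exact_mod_cast Int.lt_ediv_add_one_mul_self k hS
  apply Ico_subset_Ico
  · calc ((k / S : ℤ) : ℝ) * (S * δ) = ((k / S : ℤ) * S : ℝ) * δ := by ring
      _ ≤ k * δ := mul_le_mul_of_nonneg_right hlo hδ
  · calc ((k : ℝ) + 1) * δ ≤ (((k / S : ℤ) : ℝ) + 1) * S * δ := mul_le_mul_of_nonneg_right hhi hδ
      _ = _ := by ring

lemma dSq_subset_dSq_parQ {δ : ℝ} (hδ : 0 ≤ δ) {S : ℤ} (hS : 0 < S) (q : ℤ × ℤ) :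
    dSq δ q ⊆ dSq (S * δ) (parQ S q) :=
  prod_mono (Ico_subset_Ico_fdiv hδ hS q.1) (Ico_subset_Ico_fdiv hδ hS q.2)

lemma dTube_subset_dTube_parQ {δ : ℝ} (hδ : 0 ≤ δ) {S : ℤ} (hS : 0 < S) (q : ℤ × ℤ) :
    dTube δ q ⊆ dTube (S * δ) (parQ S q) :=
  fun _ ⟨ab, hab, hz⟩ => ⟨ab, dSq_subset_dSq_parQ hδ hS q hab, hz⟩

lemma cthickening_nbTube_subset_nbTube_parQ {c δ Δ : ℝ} (hc : 0 ≤ c) (hδ : 0 ≤ δ)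
    (hΔ : 0 ≤ Δ) (hcΔ : Δ + c * δ ≤ c * Δ) {S : ℤ} (hS : 0 < S) (hSΔ : Δ = S * δ)
    (q : ℤ × ℤ) :
    cthickening Δ (nbTube c δ q) ⊆ nbTube c Δ (parQ S q) :=
  calc cthickening Δ (nbTube c δ q) ⊆ cthickening (Δ + c * δ) (dTube δ q) :=
        cthickening_cthickening_subset hΔ (mul_nonneg hc hδ) _
    _ ⊆ cthickening (c * Δ) (dTube δ q) := cthickening_mono hcΔ _
    _ ⊆ nbTube c Δ (parQ S q) := by
        rw [hSΔ]
        exact cthickening_subset_of_subset _ (dTube_subset_dTube_parQ hδ hS q)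

lemma two_zpow_neg_eq_two_pow_sub_mul {m n : ℕ} (hmn : m ≤ n) :
    (2 : ℝ) ^ (-(m : ℤ)) = (((2 : ℤ) ^ (n - m) : ℤ) : ℝ) * 2 ^ (-(n : ℤ)) := by
  rw [Int.cast_pow, Int.cast_ofNat, ← zpow_natCast, ← zpow_add₀ two_ne_zero]
  congr 1
  omega

theorem thicken_dyadic_tube_general (n m : ℕ) (δ Δ : ℝ)
    (hδ : δ = 2 ^ (-(n : ℤ))) (hΔ : Δ = 2 ^ (-(m : ℤ)))
    (h : 30 * δ < Δ) (q : ℤ × ℤ) :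
    Metric.cthickening Δ (nbTube 6 δ q) ∩
        (Set.Ico (-1 : ℝ) 2 ×ˢ Set.Ico (-1 : ℝ) 2)
      ⊆ nbTube 6 Δ (parQ ((2 : ℤ) ^ (n - m)) q) := by
  have hδ0 : 0 < δ := hδ ▸ by positivity
  have hmn : m ≤ n := by
    have : (2 : ℝ) ^ (-(n : ℤ)) < 2 ^ (-(m : ℤ)) := hδ ▸ hΔ ▸ by linarith
    have := (zpow_lt_zpow_iff_right₀ one_lt_two).mp this
    omega
  have hSΔ : Δ = (((2 : ℤ) ^ (n - m) : ℤ) : ℝ) * δ := by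
    rw [hδ, hΔ, two_zpow_neg_eq_two_pow_sub_mul hmn]
  exact inter_subset_left.trans <| cthickening_nbTube_subset_nbTube_parQ (by norm_num)
    hδ0.le (by linarith) (by linarith) (by positivity) hSΔ q

/-- **Thickening lemma for dyadic tubes.** For a dyadic `δ`-tube `T` and a dyadic
scale `Δ > 30 δ`, the `Δ`-neighbourhood of `6T` intersected with `[−1,2)²` is
contained in `6(T^Δ)`, where `T^Δ` is the dyadic `Δ`-tube containing `T`. -/
theorem thicken_dyadic_tube (n m : ℕ) (δ Δ : ℝ)
    (hδ : δ = 2 ^ (-(n : ℤ))) (hΔ : Δ = 2 ^ (-(m : ℤ)))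
    (h : 30 * δ < Δ) (q : ℤ × ℤ) (hq : tubeIdx δ q) :
    Metric.cthickening Δ (nbTube 6 δ q) ∩
        (Set.Ico (-1 : ℝ) 2 ×ˢ Set.Ico (-1 : ℝ) 2)
      ⊆ nbTube 6 Δ (parQ ((2 : ℤ) ^ (n - m)) q) :=
  thicken_dyadic_tube_general n m δ Δ hδ hΔ h q

end
end

section
/- Let δ < Δ/32 with δ, Δ ∈ 2^{−ℕ}. Suppose 𝒫 ⊂ [0,1]² is a (Δ, 1, K)-set of not necessarily distinct dyadic δ-squares, i.e. for all Δ ≤ r ≤ 1 and Q ∈ 𝒟_r(𝒫), |𝒫 ∩ Q| ≤ K r |𝒫|; and suppose any two distinct Q₁, Q₂ ∈ 𝒟_Δ(𝒫) satisfy dist(Q₁, Q₂) ≥ Δ. Then Σ over dyadic δ-tubes T with N_{Δ,b}(T) ≥ 2 of N_{Δ,b}(T)² is ≲ K log(1/Δ) · |𝒫|²/b². Consequently, if 𝒯_{a,b} is a set of essentially distinct dyadic δ-tubes with N_{Δ,b}(T) ≥ a for each T ∈ 𝒯_{a,b} and a ≥ 2, then |𝒯_{a,b}| ≲ K log(1/Δ)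 · |𝒫|²/(ab)². -/
open Set Metric
open scoped Classical

noncomputable section

/-- The union of the dyadic `δ`-squares of a multiset of indices. -/
def mUnion (δ : ℝ) (P : Multiset (ℤ × ℤ)) : Set (ℝ × ℝ) :=
  {x | ∃ p ∈ P, x ∈ dSq δ p}

/-- The number of dyadic `δ`-squares of the multiset `P` (with multiplicity)
contained in the set `A`. -/
def mCount (δ : ℝ) (P : Multiset (ℤ × ℤ)) (A : Set (ℝ × ℝ)) : ℕ :=
  Multiset.countP (fun p => dSq δ p ⊆ A) P

/-- `N_{Δ,b}(T)`: the number of `Q ∈ 𝒟_Δ(𝒫)` with `|6T ∩ Q ∩ 𝒫| ≥ b`, where `T`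
is a dyadic `δ`-tube and `6T` is its `6δ`-neighbourhood. -/
def NCount6 (δ Δ : ℝ) (P : Multiset (ℤ × ℤ)) (b : ℝ) (t : ℤ × ℤ) : ℕ :=
  Nat.card {Q : ℤ × ℤ | (dSq Δ Q ∩ mUnion δ P).Nonempty ∧
    (b : ℝ) ≤ (mCount δ P (nbTube 6 δ t ∩ dSq Δ Q) : ℝ)}

-- AUX

lemma mem_dSq' {δ : ℝ} {q : ℤ × ℤ} {z : ℝ × ℝ} :
    z ∈ dSq δ q ↔ ((q.1 : ℝ) * δ ≤ z.1 ∧ z.1 < ((q.1 : ℝ) + 1) * δ) ∧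
      ((q.2 : ℝ) * δ ≤ z.2 ∧ z.2 < ((q.2 : ℝ) + 1) * δ) := by
  simp [dSq, Set.mem_Ico]

lemma corner_mem_dSq {δ : ℝ} (hδ : 0 < δ) (q : ℤ × ℤ) :
    ((q.1 : ℝ) * δ, (q.2 : ℝ) * δ) ∈ dSq δ q := by
  rw [mem_dSq']
  dsimp only
  constructor
  · exact ⟨le_refl _, by nlinarith⟩
  · exact ⟨le_refl _, by nlinarith⟩

lemma Ico_unique {ρ : ℝ} (hρ : 0 < ρ) {k₁ k₂ : ℤ} {x : ℝ}
    (h₁ : (k₁ : ℝ) * ρ ≤ x ∧ x < ((k₁ : ℝ) + 1) * ρ)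
    (h₂ : (k₂ : ℝ) * ρ ≤ x ∧ x < ((k₂ : ℝ) + 1) * ρ) : k₁ = k₂ := by
  have a : (k₁ : ℝ) < (k₂ : ℝ) + 1 := by nlinarith [h₁.1, h₂.2]
  have b : (k₂ : ℝ) < (k₁ : ℝ) + 1 := by nlinarith [h₂.1, h₁.2]
  have a' : k₁ < k₂ + 1 := by exact_mod_cast a
  have b' : k₂ < k₁ + 1 := by exact_mod_cast b
  omega

lemma dSq_eq_of_mem {ρ : ℝ} (hρ : 0 < ρ) {Q₁ Q₂ : ℤ × ℤ} {z : ℝ × ℝ}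
    (h₁ : z ∈ dSq ρ Q₁) (h₂ : z ∈ dSq ρ Q₂) : Q₁ = Q₂ := by
  rw [mem_dSq'] at h₁ h₂
  exact Prod.ext (Ico_unique hρ h₁.1 h₂.1) (Ico_unique hρ h₁.2 h₂.2)

lemma dSq_subset_parQ {δ : ℝ} (hδ : 0 < δ) {S : ℤ} (hS : 0 < S) (q : ℤ × ℤ) :
    dSq δ q ⊆ dSq ((S : ℝ) * δ) (parQ S q) := by
  intro z hz
  rw [mem_dSq'] at hz ⊢
  have key : ∀ a : ℤ, ((a.fdiv S : ℝ) * ((S:ℝ) * δ) ≤ (a:ℝ) * δ ∧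
      ((a:ℝ) + 1) * δ ≤ ((a.fdiv S : ℝ) + 1) * ((S:ℝ) * δ)) := by
    intro a
    rw [Int.fdiv_eq_ediv_of_nonneg a hS.le]
    have h1 : (a / S) * S ≤ a := Int.ediv_mul_le a hS.ne'
    have h2 : a < (a / S + 1) * S := Int.lt_ediv_add_one_mul_self a hS
    have h2' : a + 1 ≤ (a / S + 1) * S := h2
    have h1r : ((a / S : ℤ) : ℝ) * (S : ℝ) ≤ (a : ℝ) := by exact_mod_cast h1
    have h2r : ((a : ℝ) + 1) ≤ (((a / S : ℤ) : ℝ) + 1) * (S : ℝ) := by exact_mod_cast h2'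
    constructor <;> nlinarith
  obtain ⟨k1a, k1b⟩ := key q.1
  obtain ⟨k2a, k2b⟩ := key q.2
  refine ⟨⟨le_trans k1a hz.1.1, lt_of_lt_of_le hz.1.2 k1b⟩,
          ⟨le_trans k2a hz.2.1, lt_of_lt_of_le hz.2.2 k2b⟩⟩

lemma dSq_par_unique {δ : ℝ} (hδ : 0 < δ) {S : ℤ} (hS : 0 < S) {q Q : ℤ × ℤ}
    (h : dSq δ q ⊆ dSq ((S : ℝ) * δ) Q) : Q = parQ S q := by
  have hρ : 0 < (S : ℝ) * δ := by positivity
  have hc := corner_mem_dSq hδ q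
  exact dSq_eq_of_mem hρ (h hc) (dSq_subset_parQ hδ hS q hc)

lemma card_Icc_le_real (a b : ℤ) {x : ℝ} (hx : (b : ℝ) - (a : ℝ) + 1 ≤ x) (h0 : 0 ≤ x) :
    ((Finset.Icc a b).card : ℝ) ≤ x := by
  rw [Int.card_Icc]
  rcases le_or_gt (b + 1 - a) 0 with h | h
  · rw [Int.toNat_of_nonpos h]; simpa using h0
  · have := Int.toNat_of_nonneg h.le
    have : ((b + 1 - a).toNat : ℝ) = (b : ℝ) + 1 - a := by exact_mod_cast this
    rw [this]; linarith

lemma abs_pt_near_tube {δ : ℝ} (hδ : 0 < δ) {t : ℤ × ℤ} (ht : tubeIdx δ t) {z : ℝ × ℝ}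
    (hz1 : |z.1| ≤ 1) (hz : z ∈ nbTube 6 δ t) :
    |z.2 - (t.1 : ℝ) * δ * z.1 - (t.2 : ℝ) * δ| ≤ 16 * δ := by
  rw [nbTube, Metric.mem_cthickening_iff] at hz
  have hlt : EMetric.infEdist z (dTube δ t) < ENNReal.ofReal (7 * δ) :=
    lt_of_le_of_lt hz (by
      rw [ENNReal.ofReal_lt_ofReal_iff (by positivity)]
      nlinarith)
  obtain ⟨y, hy, hey⟩ := EMetric.infEdist_lt_iff.mp hlt
  have hdy : dist z y < 7 * δ := edist_lt_ofReal.mp hey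
  obtain ⟨ab, hab, habe⟩ := hy
  rw [mem_dSq'] at hab
  have hd1 : |z.1 - y.1| < 7 * δ := by
    have := le_max_left (dist z.1 y.1) (dist z.2 y.2)
    rw [Prod.dist_eq] at hdy
    have : dist z.1 y.1 < 7 * δ := lt_of_le_of_lt this hdy
    rwa [Real.dist_eq] at this
  have hd2 : |z.2 - y.2| < 7 * δ := by
    have := le_max_right (dist z.1 y.1) (dist z.2 y.2)
    rw [Prod.dist_eq] at hdy
    have : dist z.2 y.2 < 7 * δ := lt_of_le_of_lt this hdy
    rwa [Real.dist_eq] at this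
  have habs1 : |ab.1| ≤ 1 := by
    rw [abs_le]
    constructor
    · linarith [ht.1, hab.1.1]
    · linarith [ht.2, hab.1.2.le]
  have e1 : |ab.1 * (y.1 - z.1)| ≤ 7 * δ := by
    rw [abs_mul]
    calc |ab.1| * |y.1 - z.1| ≤ 1 * (7 * δ) := by
          apply mul_le_mul habs1 ?_ (abs_nonneg _) zero_le_one
          rw [abs_sub_comm]; exact hd1.le
      _ = 7 * δ := by ring
  have e2 : |(ab.1 - (t.1 : ℝ) * δ) * z.1| ≤ δ := by
    rw [abs_mul]
    have h1 : |ab.1 - (t.1 : ℝ) * δ| ≤ δ := by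
      rw [abs_le]; constructor
      · linarith [hab.1.1]
      · nlinarith [hab.1.2]
    calc |ab.1 - (t.1:ℝ)*δ| * |z.1| ≤ δ * 1 :=
          mul_le_mul h1 hz1 (abs_nonneg _) hδ.le
      _ = δ := by ring
  have e3 : |ab.2 - (t.2 : ℝ) * δ| ≤ δ := by
    rw [abs_le]; constructor
    · linarith [hab.2.1]
    · nlinarith [hab.2.2]
  have key : z.2 - (t.1 : ℝ) * δ * z.1 - (t.2 : ℝ) * δ =
      (z.2 - y.2) + ab.1 * (y.1 - z.1) + (ab.1 - (t.1 : ℝ) * δ) * z.1 + (ab.2 - (t.2 : ℝ) * δ) := by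
    rw [habe]; ring
  rw [key]
  have T1 : |(z.2 - y.2) + ab.1 * (y.1 - z.1)| ≤ 14 * δ := (abs_add_le _ _).trans (by linarith)
  have T2 : |(z.2 - y.2) + ab.1 * (y.1 - z.1) + (ab.1 - (t.1:ℝ)*δ) * z.1| ≤ 15 * δ :=
    (abs_add_le _ _).trans (by linarith)
  exact (abs_add_le _ _).trans (by linarith)

lemma abs_sub_le' (a b : ℝ) : |a - b| ≤ |a| + |b| := by
  rw [sub_eq_add_neg]
  exact (abs_add_le _ _).trans (by rw [abs_neg])

lemma tube_pair_count {δ Δ : ℝ} (hδ : 0 < δ) (h64 : 64 * δ ≤ Δ) {z₁ z₂ : ℝ × ℝ}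
    (h₁ : |z₁.1| ≤ 1) (h₂ : |z₂.1| ≤ 1) (hd : Δ ≤ dist z₁ z₂) (hd1 : dist z₁ z₂ ≤ 1)
    (T : Finset (ℤ × ℤ)) (hT : ∀ t ∈ T, tubeIdx δ t) :
    ((T.filter (fun t => z₁ ∈ nbTube 6 δ t ∧ z₂ ∈ nbTube 6 δ t)).card : ℝ) ≤
      4515 / dist z₁ z₂ := by
  set d := dist z₁ z₂ with hdd
  have hΔ0 : 0 < Δ := lt_of_lt_of_le (by positivity) h64
  have hd0 : 0 < d := lt_of_lt_of_le hΔ0 hd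
  set F := T.filter (fun t => z₁ ∈ nbTube 6 δ t ∧ z₂ ∈ nbTube 6 δ t) with hFdef
  rcases F.eq_empty_or_nonempty with hF | ⟨t₀, ht₀⟩
  · rw [hF]; simp; positivity
  · have hcon : ∀ t ∈ F, |z₁.2 - (t.1:ℝ) * δ * z₁.1 - (t.2:ℝ) * δ| ≤ 16 * δ ∧
        |z₂.2 - (t.1:ℝ) * δ * z₂.1 - (t.2:ℝ) * δ| ≤ 16 * δ := by
      intro t htF
      have htm := Finset.mem_filter.mp htF
      exact ⟨abs_pt_near_tube hδ (hT t htm.1) h₁ htm.2.1,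
             abs_pt_near_tube hδ (hT t htm.1) h₂ htm.2.2⟩
    set Δu := z₁.1 - z₂.1 with hΔu
    set Δv := z₁.2 - z₂.2 with hΔv
    have hdm : d = max |Δu| |Δv| := by
      rw [hdd, Prod.dist_eq, Real.dist_eq, Real.dist_eq]
    have habs_t1 : ∀ t ∈ F, |(t.1:ℝ) * δ| ≤ 1 := by
      intro t htF
      have ht := hT t (Finset.mem_filter.mp htF).1
      rw [abs_le]; exact ⟨ht.1, by nlinarith [ht.2]⟩
    have hdiff : ∀ t ∈ F, |Δv - (t.1:ℝ) * δ * Δu| ≤ 32 * δ := by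
      intro t htF
      obtain ⟨c1, c2⟩ := hcon t htF
      have key : Δv - (t.1:ℝ) * δ * Δu =
          (z₁.2 - (t.1:ℝ) * δ * z₁.1 - (t.2:ℝ) * δ) -
          (z₂.2 - (t.1:ℝ) * δ * z₂.1 - (t.2:ℝ) * δ) := by rw [hΔu, hΔv]; ring
      rw [key]
      exact (abs_sub_le' _ _).trans (by linarith)
    have hu : d / 2 ≤ |Δu| := by
      rcases le_or_gt |Δv| |Δu| with hcase | hcase
      · rw [hdm, max_eq_left hcase]; linarith [abs_nonneg Δu]
      · have hdv : d = |Δv| := by rw [hdm, max_eq_right hcase.le]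
        have e1 := hdiff t₀ ht₀
        have e2 := habs_t1 t₀ ht₀
        have e3 : |Δv| - |(t₀.1:ℝ) * δ * Δu| ≤ |Δv - (t₀.1:ℝ) * δ * Δu| :=
          abs_sub_abs_le_abs_sub _ _
        have e4 : |(t₀.1:ℝ) * δ * Δu| ≤ |Δu| := by
          rw [abs_mul]
          nlinarith [abs_nonneg Δu, abs_nonneg ((t₀.1:ℝ) * δ)]
        have e5 : 32 * δ ≤ d / 2 := by linarith
        linarith
    have hΔu0 : Δu ≠ 0 := by
      intro h
      rw [h, abs_zero] at hu; linarith
    have hΔuabs : 0 < |Δu| := abs_pos.mpr hΔu0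
    set c : ℝ := Δv / (δ * Δu) with hc
    set R : ℝ := 64 / d with hR
    have hR0 : 0 < R := by positivity
    have hk : ∀ t ∈ F, ⌈c - R⌉ ≤ t.1 ∧ t.1 ≤ ⌊c + R⌋ := by
      intro t htF
      have e1 := hdiff t htF
      have hne : δ * Δu ≠ 0 := mul_ne_zero hδ.ne' hΔu0
      have mulform : ((t.1:ℝ) - c) * (δ * Δu) = (t.1:ℝ) * δ * Δu - Δv := by
        rw [hc]; field_simp
      have habs : |(t.1:ℝ) - c| * (δ * |Δu|) = |(t.1:ℝ) * δ * Δu - Δv| := by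
        rw [← mulform, abs_mul, abs_mul, abs_of_pos hδ]
      have e1' : |(t.1:ℝ) * δ * Δu - Δv| ≤ 32 * δ := by
        rw [abs_sub_comm]; exact e1
      have key1 : |(t.1:ℝ) - c| ≤ 32 / |Δu| := by
        rw [le_div_iff₀ hΔuabs]
        nlinarith [habs, e1', hδ]
      have key2 : (32:ℝ) / |Δu| ≤ R := by
        rw [hR, div_le_div_iff₀ hΔuabs hd0]
        linarith
      have key : |(t.1:ℝ) - c| ≤ R := key1.trans key2
      rw [abs_le] at key
      constructor
      · exact Int.ceil_le.mpr (by linarith [key.1])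
      · exact Int.le_floor.mpr (by linarith [key.2])
    have hl : ∀ t ∈ F, -17 ≤ t.2 - ⌊(z₁.2 - (t.1:ℝ) * δ * z₁.1) / δ⌋ ∧
        t.2 - ⌊(z₁.2 - (t.1:ℝ) * δ * z₁.1) / δ⌋ ≤ 17 := by
      intro t htF
      obtain ⟨c1, _⟩ := hcon t htF
      set w := (z₁.2 - (t.1:ℝ) * δ * z₁.1) / δ with hw
      have e1 : |(t.2:ℝ) - w| ≤ 16 := by
        have : (t.2:ℝ) - w = -((z₁.2 - (t.1:ℝ) * δ * z₁.1 - (t.2:ℝ) * δ) / δ) := by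
          rw [hw]; field_simp; ring
        rw [this, abs_neg, abs_div, abs_of_pos hδ, div_le_iff₀ hδ]
        linarith
      have e2 : |w - (⌊w⌋ : ℝ)| ≤ 1 := by
        rw [abs_le]
        constructor
        · linarith [Int.floor_le w]
        · linarith [Int.lt_floor_add_one w]
      have e3 : |(t.2:ℝ) - (⌊w⌋:ℝ)| ≤ 17 := by
        have heq : (t.2:ℝ) - (⌊w⌋:ℝ) = ((t.2:ℝ) - w) + (w - (⌊w⌋:ℝ)) := by ring
        rw [heq]
        refine (abs_add_le _ _).trans ?_
        linarith
      rw [abs_le] at e3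
      constructor
      · exact_mod_cast (by push_cast; linarith [e3.1] : (-17 : ℝ) ≤ ((t.2 - ⌊w⌋ : ℤ) : ℝ))
      · exact_mod_cast (by push_cast; linarith [e3.2] : ((t.2 - ⌊w⌋ : ℤ) : ℝ) ≤ 17)
    set G := Finset.Icc ⌈c - R⌉ ⌊c + R⌋ ×ˢ Finset.Icc (-17 : ℤ) 17 with hG
    have hcard : F.card ≤ G.card := by
      apply Finset.card_le_card_of_injOn
        (fun t => (t.1, t.2 - ⌊(z₁.2 - (t.1:ℝ) * δ * z₁.1) / δ⌋))
      · intro t htF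
        rw [hG, Finset.mem_coe, Finset.mem_product]
        refine ⟨Finset.mem_Icc.mpr (hk t htF), Finset.mem_Icc.mpr (hl t htF)⟩
      · intro t ht t' ht' h
        simp only [Prod.mk.injEq] at h
        have h1 := h.1
        have h2 := h.2
        rw [h1] at h2
        have : t.2 = t'.2 := by omega
        exact Prod.ext h1 this
    have hGcard : (G.card : ℝ) ≤ (2 * R + 1) * 35 := by
      rw [hG, Finset.card_product]
      have c2 : (Finset.Icc (-17:ℤ) 17).card = 35 := by rw [Int.card_Icc]; rfl
      rw [c2]
      push_cast
      have c1 : ((Finset.Icc ⌈c - R⌉ ⌊c + R⌋).card : ℝ) ≤ 2 * R + 1 := by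
        apply card_Icc_le_real
        · have l1 : (⌊c + R⌋ : ℝ) ≤ c + R := Int.floor_le _
          have l2 : c - R ≤ (⌈c - R⌉ : ℝ) := Int.le_ceil _
          linarith
        · linarith
      nlinarith [c1, hR0]
    have final : (F.card : ℝ) ≤ (2 * R + 1) * 35 := le_trans (by exact_mod_cast hcard) hGcard
    have hRd : (2 * R + 1) * 35 ≤ 4515 / d := by
      have h1d : (1:ℝ) ≤ 1 / d := by
        rw [le_div_iff₀ hd0]; linarith
      have e35 : (35:ℝ) ≤ 35 / d := by
        have := mul_le_mul_of_nonneg_left h1d (by norm_num : (0:ℝ) ≤ 35)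
        calc (35:ℝ) = 35 * 1 := by ring
          _ ≤ 35 * (1/d) := this
          _ = 35 / d := by ring
      have e : (2 * R + 1) * 35 = 4480 / d + 35 := by rw [hR]; ring
      have e2 : (4515:ℝ) / d = 4480 / d + 35 / d := by ring
      linarith
    exact final.trans hRd

lemma list_countP_real {α : Type*} (p : α → Prop) [DecidablePred p] :
    ∀ l : List α, ((l.countP (fun a => decide (p a)) : ℝ)) =
      ∑ i : Fin l.length, if p (l.get i) then (1:ℝ) else 0 := by
  intro l
  induction l with
  | nil => simp
  | cons a l ih =>
    rw [List.countP_cons]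
    have : (List.length (a :: l)) = l.length + 1 := rfl
    have h2 : (∑ i : Fin ((a :: l).length), if p ((a :: l).get i) then (1:ℝ) else 0) =
        (if p a then (1:ℝ) else 0) + ∑ i : Fin l.length, if p (l.get i) then (1:ℝ) else 0 := by
      show (∑ i : Fin (l.length + 1), if p ((a :: l).get i) then (1:ℝ) else 0) = _
      rw [Fin.sum_univ_succ]
      rfl
    rw [h2]
    push_cast
    rw [← ih]
    by_cases hpa : p a <;> simp [hpa] <;> ring

lemma mcountP_real (p : ℤ × ℤ → Prop) [DecidablePred p] (P : Multiset (ℤ × ℤ)) :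
    ((Multiset.countP p P : ℝ)) =
      ∑ i : Fin P.toList.length, if p (P.toList.get i) then (1:ℝ) else 0 := by
  conv_lhs => rw [← Multiset.coe_toList P]
  rw [Multiset.coe_countP]
  exact list_countP_real p P.toList

lemma annulus_find {Δ d : ℝ} {m : ℕ} (hΔ : Δ = 2 ^ (-(m:ℤ))) (hd : Δ ≤ d) (hd1 : d < 1) :
    ∃ s : ℕ, 1 ≤ s ∧ s ≤ m ∧ (2:ℝ) ^ (-(s:ℤ)) ≤ d ∧ d < 2 ^ (-(s:ℤ) + 1) := by
  have hex : ∃ s : ℕ, (2:ℝ) ^ (-(s:ℤ)) ≤ d := ⟨m, by rw [← hΔ]; exact hd⟩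
  refine ⟨Nat.find hex, ?_, ?_, Nat.find_spec hex, ?_⟩
  · rcases Nat.eq_zero_or_pos (Nat.find hex) with h0 | h1
    · exfalso
      have := Nat.find_spec hex
      rw [h0] at this
      norm_num at this
      linarith
    · exact h1
  · exact Nat.find_le (by rw [← hΔ]; exact hd)
  · have h1 : 1 ≤ Nat.find hex := by
      rcases Nat.eq_zero_or_pos (Nat.find hex) with h0 | h1
      · exfalso
        have := Nat.find_spec hex
        rw [h0] at this
        norm_num at this
        linarith
      · exact h1
    have := Nat.find_min hex (show Nat.find hex - 1 < Nat.find hex by omega)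
    push_neg at this
    have hcast : (-(↑(Nat.find hex - 1) : ℤ)) = -(Nat.find hex : ℤ) + 1 := by
      have : ((Nat.find hex - 1 : ℕ) : ℤ) = (Nat.find hex : ℤ) - 1 := by
        omega
      rw [this]; ring
    rwa [hcast] at this

def corner (δ : ℝ) (q : ℤ × ℤ) : ℝ × ℝ := ((q.1:ℝ) * δ, (q.2:ℝ) * δ)

lemma corner_fst (δ : ℝ) (q : ℤ × ℤ) : (corner δ q).1 = (q.1:ℝ) * δ := rfl
lemma corner_snd (δ : ℝ) (q : ℤ × ℤ) : (corner δ q).2 = (q.2:ℝ) * δ := rfl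

lemma corner_mem {δ : ℝ} (hδ : 0 < δ) (q : ℤ × ℤ) : corner δ q ∈ dSq δ q :=
  corner_mem_dSq hδ q


set_option maxHeartbeats 4000000 in
/-- **The `L²` lemma for rich tubes.**  Let `𝒫 ⊆ [0,1]²` be a `(Δ, 1, K)`-set of
(not necessarily distinct) dyadic `δ`-squares whose `Δ`-squares are
`Δ`-separated.  Then `Σ_{N_{Δ,b}(T) ≥ 2} N_{Δ,b}(T)² ≲ K log(1/Δ) |𝒫|²/b²`, and
consequently any family of essentially distinct dyadic `δ`-tubes with
`N_{Δ,b}(T) ≥ a ≥ 2` has cardinality `≲ K log(1/Δ) |𝒫|²/(ab)²`. -/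
theorem rich_tubes_L2 :
    ∃ C > (0 : ℝ), ∀ (n m : ℕ) (δ Δ : ℝ), δ = 2 ^ (-(n : ℤ)) →
      Δ = 2 ^ (-(m : ℤ)) → δ < Δ / 32 →
      ∀ (K b : ℝ) (P : Multiset (ℤ × ℤ)), 0 < K → 1 ≤ b →
        mUnion δ P ⊆ Set.Icc (0 : ℝ) 1 ×ˢ Set.Icc (0 : ℝ) 1 →
        (∀ (j : ℕ) (ρ : ℝ), ρ = 2 ^ (-(j : ℤ)) → Δ ≤ ρ → ρ ≤ 1 →
          ∀ Q : ℤ × ℤ, (dSq ρ Q ∩ mUnion δ P).Nonempty →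
            (mCount δ P (dSq ρ Q) : ℝ) ≤ K * ρ * (Multiset.card P : ℝ)) →
        (∀ Q₁ Q₂ : ℤ × ℤ, Q₁ ≠ Q₂ →
          (dSq Δ Q₁ ∩ mUnion δ P).Nonempty → (dSq Δ Q₂ ∩ mUnion δ P).Nonempty →
          ∀ x ∈ dSq Δ Q₁, ∀ y ∈ dSq Δ Q₂, Δ ≤ dist x y) →
        (∀ T : Finset (ℤ × ℤ),
          (∀ t ∈ T, tubeIdx δ t ∧ 2 ≤ (NCount6 δ Δ P b t : ℝ)) →
          (∑ t ∈ T, ((NCount6 δ Δ P b t : ℝ)) ^ 2) ≤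
            C * K * Real.log Δ⁻¹ * (Multiset.card P : ℝ) ^ 2 / b ^ 2) ∧
        ∀ (a : ℝ) (T : Finset (ℤ × ℤ)), 2 ≤ a →
          (∀ t ∈ T, tubeIdx δ t) →
          (∀ t₁ ∈ T, ∀ t₂ ∈ T, t₁ ≠ t₂ →
            MeasureTheory.volume
                (dTube δ t₁ ∩ dTube δ t₂ ∩ (Set.Icc (0 : ℝ) 1 ×ˢ Set.univ)) ≤
              (1 / 4 : ENNReal) *
                MeasureTheory.volume (dTube δ t₁ ∩ (Set.Icc (0 : ℝ) 1 ×ˢ Set.univ))) →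
          (∀ t ∈ T, a ≤ (NCount6 δ Δ P b t : ℝ)) →
          (T.card : ℝ) ≤ C * K * Real.log Δ⁻¹ * (Multiset.card P : ℝ) ^ 2 /
            (a * b) ^ 2 := by
  refine ⟨1000000, by norm_num, ?_⟩
  intro n m δ Δ hδeq hΔeq hδΔ K b P hK hb hPsub hReg hSep
  have hδ : 0 < δ := by rw [hδeq]; positivity
  have hΔ : 0 < Δ := by rw [hΔeq]; positivity
  have hb0 : (0:ℝ) < b := lt_of_lt_of_le one_pos hb
  have h12 : (1:ℝ) < 2 := one_lt_two
  -- exponent comparison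
  have hnm6 : m + 6 ≤ n := by
    have h32 : Δ / 32 = (2:ℝ) ^ (-(m:ℤ) - 5) := by
      rw [hΔeq, show ((32:ℝ)) = 2 ^ (5:ℤ) by norm_num, ← zpow_sub₀ (by norm_num : (2:ℝ) ≠ 0)]
    rw [hδeq, h32] at hδΔ
    have := (zpow_lt_zpow_iff_right₀ h12).mp hδΔ
    omega
  have hmn : m ≤ n := by omega
  have h64 : 64 * δ ≤ Δ := by
    have e : 64 * δ = (2:ℝ) ^ ((6:ℤ) - n) := by
      rw [hδeq, show ((64:ℝ)) = 2 ^ (6:ℤ) by norm_num,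
        ← zpow_add₀ (by norm_num : (2:ℝ) ≠ 0)]
      ring_nf
    rw [e, hΔeq]
    exact zpow_le_zpow_right₀ h12.le (by omega)
  -- the Δ/δ ratio
  have hratio : ∀ k : ℕ, k ≤ n → (((2:ℤ) ^ (n - k) : ℤ) : ℝ) * δ = 2 ^ (-(k:ℤ)) := by
    intro k hk
    rw [hδeq]
    push_cast
    rw [← zpow_natCast (2:ℝ) (n - k), ← zpow_add₀ (by norm_num : (2:ℝ) ≠ 0)]
    congr 1
    omega
  set S : ℤ := 2 ^ (n - m) with hSdef
  have hS : 0 < S := by positivity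
  have hSδ : (S : ℝ) * δ = Δ := by
    rw [hSdef, hΔeq]
    exact hratio m hmn
  -- list representation of P
  set l : List (ℤ × ℤ) := P.toList with hl
  have hcardP : (Multiset.card P : ℝ) = (l.length : ℝ) := by
    rw [hl, Multiset.length_toList]
  have hmemP : ∀ i : Fin l.length, l.get i ∈ P := by
    intro i
    have : l.get i ∈ l := List.get_mem l i
    rw [← Multiset.coe_toList P]
    exact Multiset.mem_coe.mpr this
  have hsubU : ∀ i : Fin l.length, dSq δ (l.get i) ⊆ mUnion δ P :=
    fun i x hx => ⟨l.get i, hmemP i, hx⟩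
  have hsubIcc : ∀ i : Fin l.length, dSq δ (l.get i) ⊆ Set.Icc (0:ℝ) 1 ×ˢ Set.Icc (0:ℝ) 1 :=
    fun i => (hsubU i).trans hPsub
  have hcr_mem : ∀ i : Fin l.length, corner δ (l.get i) ∈ dSq δ (l.get i) :=
    fun i => corner_mem hδ _
  have hcr_x : ∀ i : Fin l.length, 0 ≤ (corner δ (l.get i)).1 ∧
      (corner δ (l.get i)).1 ≤ 1 - δ/2 ∧ 0 ≤ (corner δ (l.get i)).2 ∧
      (corner δ (l.get i)).2 ≤ 1 - δ/2 := by
    intro i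
    have h1 := hsubIcc i (hcr_mem i)
    rw [Set.mem_prod] at h1
    have hmid : ((corner δ (l.get i)).1 + δ/2, (corner δ (l.get i)).2 + δ/2) ∈
        dSq δ (l.get i) := by
      rw [mem_dSq']
      dsimp only
      simp only [corner_fst, corner_snd]
      have e1 : (((l.get i).1:ℝ) + 1) * δ = ((l.get i).1:ℝ) * δ + δ := by ring
      have e2 : (((l.get i).2:ℝ) + 1) * δ = ((l.get i).2:ℝ) * δ + δ := by ring
      refine ⟨⟨by linarith, by linarith⟩, ⟨by linarith, by linarith⟩⟩
    have h2 := hsubIcc i hmid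
    rw [Set.mem_prod] at h2
    obtain ⟨⟨a1, a2⟩, ⟨a3, a4⟩⟩ := h1
    obtain ⟨⟨b1, b2⟩, ⟨b3, b4⟩⟩ := h2
    exact ⟨a1, by linarith [b2], a3, by linarith [b4]⟩
  have hdist1 : ∀ i j, dist (corner δ (l.get i)) (corner δ (l.get j)) < 1 := by
    intro i j
    obtain ⟨a1, a2, a3, a4⟩ := hcr_x i
    obtain ⟨c1, c2, c3, c4⟩ := hcr_x j
    rw [Prod.dist_eq]
    apply max_lt
    · rw [Real.dist_eq, abs_lt]
      constructor
      · linarith [a1, c2, hδ]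
      · linarith [a2, c1, hδ]
    · rw [Real.dist_eq, abs_lt]
      constructor
      · linarith [a3, c4, hδ]
      · linarith [a4, c3, hδ]
  have hcrabs : ∀ i, |(corner δ (l.get i)).1| ≤ 1 := by
    intro i
    obtain ⟨a1, a2, _, _⟩ := hcr_x i
    rw [abs_le]
    constructor
    · linarith [a1]
    · linarith [a2, hδ]
  have hcnt : ∀ A : Set (ℝ × ℝ), (mCount δ P A : ℝ) =
      ∑ i : Fin l.length, if dSq δ (l.get i) ⊆ A then (1:ℝ) else 0 := by
    intro A
    rw [show mCount δ P A = Multiset.countP (fun p => dSq δ p ⊆ A) P from rfl]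
    rw [mcountP_real (fun p => dSq δ p ⊆ A) P]
  have hsubQ : ∀ i, dSq δ (l.get i) ⊆ dSq Δ (parQ S (l.get i)) := by
    intro i
    rw [← hSδ]
    exact dSq_subset_parQ hδ hS _
  have hQof : ∀ (i : Fin l.length) (Q : ℤ × ℤ), dSq δ (l.get i) ⊆ dSq Δ Q →
      Q = parQ S (l.get i) := by
    intro i Q h
    rw [← hSδ] at h
    exact dSq_par_unique hδ hS h
  have hsep' : ∀ i j : Fin l.length, parQ S (l.get i) ≠ parQ S (l.get j) →
      Δ ≤ dist (corner δ (l.get i)) (corner δ (l.get j)) := by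
    intro i j hne
    exact hSep _ _ hne ⟨corner δ (l.get i), hsubQ i (hcr_mem i), hsubU i (hcr_mem i)⟩
      ⟨corner δ (l.get j), hsubQ j (hcr_mem j), hsubU j (hcr_mem j)⟩
      (corner δ (l.get i)) (hsubQ i (hcr_mem i)) (corner δ (l.get j)) (hsubQ j (hcr_mem j))
  -- the pair indicator
  have hW0 : ∀ (t : ℤ × ℤ) (i j : Fin l.length), (0:ℝ) ≤
      (if (dSq δ (l.get i) ⊆ nbTube 6 δ t ∧ dSq δ (l.get j) ⊆ nbTube 6 δ t ∧
        parQ S (l.get i) ≠ parQ S (l.get j)) then (1:ℝ) else 0) := by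
    intro t i j
    split <;> norm_num
  -- KEY 1
  have key1 : ∀ t : ℤ × ℤ, 2 ≤ ((NCount6 δ Δ P b t : ℕ) : ℝ) →
      ((NCount6 δ Δ P b t : ℕ) : ℝ) ^ 2 * b ^ 2 ≤
      2 * ∑ i : Fin l.length, ∑ j : Fin l.length,
        (if (dSq δ (l.get i) ⊆ nbTube 6 δ t ∧ dSq δ (l.get j) ⊆ nbTube 6 δ t ∧
          parQ S (l.get i) ≠ parQ S (l.get j)) then (1:ℝ) else 0) := by
    intro t hN2
    set Sset : Set (ℤ × ℤ) := {Q : ℤ × ℤ | (dSq Δ Q ∩ mUnion δ P).Nonempty ∧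
      (b : ℝ) ≤ (mCount δ P (nbTube 6 δ t ∩ dSq Δ Q) : ℝ)} with hSset
    have hNC : NCount6 δ Δ P b t = Nat.card ↥Sset := rfl
    have hpos : 0 < Nat.card ↥Sset := by
      rw [← hNC]
      have : (2:ℝ) ≤ (NCount6 δ Δ P b t : ℝ) := hN2
      have h2n : 2 ≤ NCount6 δ Δ P b t := by exact_mod_cast this
      omega
    have hfin : Sset.Finite := Set.finite_coe_iff.mp (Nat.card_pos_iff.mp hpos).2
    set QS : Finset (ℤ × ℤ) := hfin.toFinset with hQS
    have hNQ : ((NCount6 δ Δ P b t : ℕ) : ℝ) = (QS.card : ℝ) := by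
      rw [hNC, Nat.card_coe_set_eq, Set.ncard_eq_toFinset_card _ hfin]
    have hM2 : 2 ≤ QS.card := by
      have : (2:ℝ) ≤ (QS.card : ℝ) := hNQ ▸ hN2
      exact_mod_cast this
    have hoffcard : ((QS.offDiag.card : ℕ) : ℝ) = (QS.card : ℝ) * (QS.card : ℝ) - QS.card := by
      rw [Finset.offDiag_card]
      have hle : QS.card ≤ QS.card * QS.card := Nat.le_mul_of_pos_left _ (by omega)
      push_cast [Nat.cast_sub hle]
      ring
    have step1 : ((QS.card : ℝ)) ^ 2 * b ^ 2 ≤ 2 * ((QS.offDiag.card : ℝ) * b ^ 2) := by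
      rw [hoffcard]
      have h2r : (2:ℝ) ≤ (QS.card : ℝ) := by exact_mod_cast hM2
      nlinarith [sq_nonneg b, h2r, sq_nonneg ((QS.card : ℝ) - 2)]
    have step2 : (QS.offDiag.card : ℝ) * b ^ 2 ≤ ∑ q ∈ QS.offDiag,
        (mCount δ P (nbTube 6 δ t ∩ dSq Δ q.1) : ℝ) *
        (mCount δ P (nbTube 6 δ t ∩ dSq Δ q.2) : ℝ) := by
      have := Finset.card_nsmul_le_sum QS.offDiag
        (fun q => (mCount δ P (nbTube 6 δ t ∩ dSq Δ q.1) : ℝ) *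
          (mCount δ P (nbTube 6 δ t ∩ dSq Δ q.2) : ℝ)) (b ^ 2) ?_
      · rw [nsmul_eq_mul] at this
        exact this
      · intro q hq
        rw [Finset.mem_offDiag] at hq
        obtain ⟨hq1, hq2, _⟩ := hq
        rw [hQS, Set.Finite.mem_toFinset] at hq1 hq2
        have e1 := hq1.2
        have e2 := hq2.2
        calc b ^ 2 = b * b := sq b
          _ ≤ _ := mul_le_mul e1 e2 hb0.le (le_trans hb0.le e1)
    have step3 : ∑ q ∈ QS.offDiag,
        (mCount δ P (nbTube 6 δ t ∩ dSq Δ q.1) : ℝ) *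
        (mCount δ P (nbTube 6 δ t ∩ dSq Δ q.2) : ℝ) =
        ∑ i : Fin l.length, ∑ j : Fin l.length, ∑ q ∈ QS.offDiag,
          (if dSq δ (l.get i) ⊆ nbTube 6 δ t ∩ dSq Δ q.1 then (1:ℝ) else 0) *
          (if dSq δ (l.get j) ⊆ nbTube 6 δ t ∩ dSq Δ q.2 then (1:ℝ) else 0) := by
      rw [show (∑ q ∈ QS.offDiag,
          (mCount δ P (nbTube 6 δ t ∩ dSq Δ q.1) : ℝ) *
          (mCount δ P (nbTube 6 δ t ∩ dSq Δ q.2) : ℝ)) =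
          ∑ q ∈ QS.offDiag, ∑ i : Fin l.length, ∑ j : Fin l.length,
          (if dSq δ (l.get i) ⊆ nbTube 6 δ t ∩ dSq Δ q.1 then (1:ℝ) else 0) *
          (if dSq δ (l.get j) ⊆ nbTube 6 δ t ∩ dSq Δ q.2 then (1:ℝ) else 0) from
        Finset.sum_congr rfl fun q _ => by
          rw [hcnt, hcnt, Finset.sum_mul_sum]]
      rw [Finset.sum_comm]
      exact Finset.sum_congr rfl fun i _ => Finset.sum_comm
    have step4 : ∀ i j : Fin l.length, (∑ q ∈ QS.offDiag,
        (if dSq δ (l.get i) ⊆ nbTube 6 δ t ∩ dSq Δ q.1 then (1:ℝ) else 0) *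
        (if dSq δ (l.get j) ⊆ nbTube 6 δ t ∩ dSq Δ q.2 then (1:ℝ) else 0)) ≤
        (if (dSq δ (l.get i) ⊆ nbTube 6 δ t ∧ dSq δ (l.get j) ⊆ nbTube 6 δ t ∧
          parQ S (l.get i) ≠ parQ S (l.get j)) then (1:ℝ) else 0) := by
      intro i j
      have hcomb : ∀ q : (ℤ × ℤ) × (ℤ × ℤ),
          (if dSq δ (l.get i) ⊆ nbTube 6 δ t ∩ dSq Δ q.1 then (1:ℝ) else 0) *
          (if dSq δ (l.get j) ⊆ nbTube 6 δ t ∩ dSq Δ q.2 then (1:ℝ) else 0) =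
          (if (dSq δ (l.get i) ⊆ nbTube 6 δ t ∩ dSq Δ q.1 ∧
               dSq δ (l.get j) ⊆ nbTube 6 δ t ∩ dSq Δ q.2) then (1:ℝ) else 0) := by
        intro q
        by_cases h1 : dSq δ (l.get i) ⊆ nbTube 6 δ t ∩ dSq Δ q.1
        · by_cases h2 : dSq δ (l.get j) ⊆ nbTube 6 δ t ∩ dSq Δ q.2
          · rw [if_pos h1, if_pos h2, if_pos ⟨h1, h2⟩]; norm_num
          · have hn : ¬(dSq δ (l.get i) ⊆ nbTube 6 δ t ∩ dSq Δ q.1 ∧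
                dSq δ (l.get j) ⊆ nbTube 6 δ t ∩ dSq Δ q.2) := fun hc => h2 hc.2
            rw [if_pos h1, if_neg h2, if_neg hn]; norm_num
        · have hn : ¬(dSq δ (l.get i) ⊆ nbTube 6 δ t ∩ dSq Δ q.1 ∧
              dSq δ (l.get j) ⊆ nbTube 6 δ t ∩ dSq Δ q.2) := fun hc => h1 hc.1
          rw [if_neg h1, if_neg hn]; norm_num
      rw [Finset.sum_congr rfl fun q _ => hcomb q, Finset.sum_boole]
      set Fl := QS.offDiag.filter (fun q => dSq δ (l.get i) ⊆ nbTube 6 δ t ∩ dSq Δ q.1 ∧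
        dSq δ (l.get j) ⊆ nbTube 6 δ t ∩ dSq Δ q.2) with hFl
      rcases Fl.eq_empty_or_nonempty with hFe | ⟨q0, hq0⟩
      · rw [hFe]
        simpa using hW0 t i j
      · have hmem := Finset.mem_filter.mp hq0
        have hoff := Finset.mem_offDiag.mp hmem.1
        have hQ1 : q0.1 = parQ S (l.get i) :=
          hQof i q0.1 ((hmem.2.1).trans Set.inter_subset_right)
        have hQ2 : q0.2 = parQ S (l.get j) :=
          hQof j q0.2 ((hmem.2.2).trans Set.inter_subset_right)
        have hcond : dSq δ (l.get i) ⊆ nbTube 6 δ t ∧ dSq δ (l.get j) ⊆ nbTube 6 δ t ∧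
            parQ S (l.get i) ≠ parQ S (l.get j) := by
          refine ⟨(hmem.2.1).trans Set.inter_subset_left,
            (hmem.2.2).trans Set.inter_subset_left, ?_⟩
          rw [← hQ1, ← hQ2]
          exact hoff.2.2
        rw [if_pos hcond]
        have hcard1 : Fl.card ≤ 1 := by
          rw [Finset.card_le_one]
          intro p hp p' hp'
          have h1 := Finset.mem_filter.mp hp
          have h2 := Finset.mem_filter.mp hp'
          have e1 : p.1 = parQ S (l.get i) := hQof i p.1 ((h1.2.1).trans Set.inter_subset_right)
          have e2 : p.2 = parQ S (l.get j) := hQof j p.2 ((h1.2.2).trans Set.inter_subset_right)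
          have e3 : p'.1 = parQ S (l.get i) := hQof i p'.1 ((h2.2.1).trans Set.inter_subset_right)
          have e4 : p'.2 = parQ S (l.get j) := hQof j p'.2 ((h2.2.2).trans Set.inter_subset_right)
          exact Prod.ext (e1.trans e3.symm) (e2.trans e4.symm)
        exact_mod_cast hcard1
    calc ((NCount6 δ Δ P b t : ℕ) : ℝ) ^ 2 * b ^ 2
        = ((QS.card : ℝ)) ^ 2 * b ^ 2 := by rw [hNQ]
      _ ≤ 2 * ((QS.offDiag.card : ℝ) * b ^ 2) := step1
      _ ≤ 2 * ∑ q ∈ QS.offDiag,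
          (mCount δ P (nbTube 6 δ t ∩ dSq Δ q.1) : ℝ) *
          (mCount δ P (nbTube 6 δ t ∩ dSq Δ q.2) : ℝ) := by linarith [step2]
      _ = 2 * ∑ i : Fin l.length, ∑ j : Fin l.length, ∑ q ∈ QS.offDiag,
          (if dSq δ (l.get i) ⊆ nbTube 6 δ t ∩ dSq Δ q.1 then (1:ℝ) else 0) *
          (if dSq δ (l.get j) ⊆ nbTube 6 δ t ∩ dSq Δ q.2 then (1:ℝ) else 0) := by
          rw [step3]
      _ ≤ _ := by
          have := Finset.sum_le_sum (fun i (_ : i ∈ (Finset.univ : Finset (Fin l.length))) =>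
            Finset.sum_le_sum (fun j (_ : j ∈ (Finset.univ : Finset (Fin l.length))) =>
              step4 i j))
          linarith [this]
  -- KEY 2
  have key2 : ∀ (T : Finset (ℤ × ℤ)), (∀ t ∈ T, tubeIdx δ t) → ∀ i j : Fin l.length,
      (∑ t ∈ T, (if (dSq δ (l.get i) ⊆ nbTube 6 δ t ∧ dSq δ (l.get j) ⊆ nbTube 6 δ t ∧
        parQ S (l.get i) ≠ parQ S (l.get j)) then (1:ℝ) else 0)) ≤
      4515 * (if Δ ≤ dist (corner δ (l.get i)) (corner δ (l.get j)) then
        1 / dist (corner δ (l.get i)) (corner δ (l.get j)) else 0) := by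
    intro T hTidx i j
    by_cases hne : parQ S (l.get i) ≠ parQ S (l.get j)
    · have hdij : Δ ≤ dist (corner δ (l.get i)) (corner δ (l.get j)) := hsep' i j hne
      have hd0 : 0 < dist (corner δ (l.get i)) (corner δ (l.get j)) := lt_of_lt_of_le hΔ hdij
      rw [if_pos hdij]
      have hstep : (∑ t ∈ T, (if (dSq δ (l.get i) ⊆ nbTube 6 δ t ∧
          dSq δ (l.get j) ⊆ nbTube 6 δ t ∧
          parQ S (l.get i) ≠ parQ S (l.get j)) then (1:ℝ) else 0)) ≤
          ((T.filter (fun t => corner δ (l.get i) ∈ nbTube 6 δ t ∧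
            corner δ (l.get j) ∈ nbTube 6 δ t)).card : ℝ) := by
        rw [← Finset.sum_boole]
        apply Finset.sum_le_sum
        intro t _
        by_cases hc : (dSq δ (l.get i) ⊆ nbTube 6 δ t ∧ dSq δ (l.get j) ⊆ nbTube 6 δ t ∧
            parQ S (l.get i) ≠ parQ S (l.get j))
        · rw [if_pos hc, if_pos ⟨hc.1 (hcr_mem i), hc.2.1 (hcr_mem j)⟩]
        · rw [if_neg hc]
          split <;> norm_num
      refine hstep.trans ?_
      have := tube_pair_count hδ h64 (hcrabs i) (hcrabs j) hdij (hdist1 i j).le T hTidx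
      calc ((T.filter (fun t => corner δ (l.get i) ∈ nbTube 6 δ t ∧
            corner δ (l.get j) ∈ nbTube 6 δ t)).card : ℝ)
          ≤ 4515 / dist (corner δ (l.get i)) (corner δ (l.get j)) := this
        _ = 4515 * (1 / dist (corner δ (l.get i)) (corner δ (l.get j))) := by ring
    · push_neg at hne
      have hz : ∀ t ∈ T, (if (dSq δ (l.get i) ⊆ nbTube 6 δ t ∧
          dSq δ (l.get j) ⊆ nbTube 6 δ t ∧
          parQ S (l.get i) ≠ parQ S (l.get j)) then (1:ℝ) else 0) = 0 := by
        intro t _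
        rw [if_neg]
        intro hc
        exact hc.2.2 hne
      rw [Finset.sum_congr rfl hz, Finset.sum_const, smul_zero]
      have : (0:ℝ) ≤ (if Δ ≤ dist (corner δ (l.get i)) (corner δ (l.get j)) then
          1 / dist (corner δ (l.get i)) (corner δ (l.get j)) else 0) := by
        split
        · positivity
        · exact le_refl _
      linarith
  -- KEY 3
  have key3 : ∀ i : Fin l.length,
      (∑ j : Fin l.length, (if Δ ≤ dist (corner δ (l.get i)) (corner δ (l.get j)) then 1 / dist (corner δ (l.get i)) (corner δ (l.get j)) else 0)) ≤
      64 * K * (m : ℝ) * (l.length : ℝ) := by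
    intro i
    rw [← Finset.sum_filter]
    have hscale : ∀ s ∈ Finset.Icc 1 m,
        (∑ j ∈ (Finset.univ.filter (fun j : Fin l.length => Δ ≤ dist (corner δ (l.get i)) (corner δ (l.get j)))).filter
          (fun j : Fin l.length => (2:ℝ)^(-(s:ℤ)) ≤ dist (corner δ (l.get i)) (corner δ (l.get j)) ∧ dist (corner δ (l.get i)) (corner δ (l.get j)) < 2^(-(s:ℤ)+1)),
          1 / dist (corner δ (l.get i)) (corner δ (l.get j))) ≤ 64 * K * (l.length : ℝ) := by
      intro s hs
      obtain ⟨hs1, hsm⟩ := Finset.mem_Icc.mp hs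
      have hs2n : s - 2 ≤ n := by omega
      have hρpos : (0:ℝ) < 2^(-(↑(s-2):ℤ)) := by positivity
      have hρ1 : (2:ℝ)^(-(↑(s-2):ℤ)) ≤ 1 := by
        have := zpow_le_zpow_right₀ h12.le (show -(↑(s-2):ℤ) ≤ 0 by omega)
        simpa using this
      have hΔρ : Δ ≤ 2^(-(↑(s-2):ℤ)) := by
        rw [hΔeq]
        exact zpow_le_zpow_right₀ h12.le (by omega)
      set S' : ℤ := 2 ^ (n - (s-2)) with hS'def
      have hS' : 0 < S' := by positivity
      have hS'δ : (S' : ℝ) * δ = 2^(-(↑(s-2):ℤ)) := by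
        rw [hS'def]
        exact hratio (s-2) hs2n
      have hRρ : (2:ℝ)^(-(s:ℤ)+1) ≤ 2^(-(↑(s-2):ℤ)) :=
        zpow_le_zpow_right₀ h12.le (by omega)
      have hRpos : (0:ℝ) < 2^(-(s:ℤ)+1) := by positivity
      set G := Finset.Icc ⌊((corner δ (l.get i)).1 - 2^(-(s:ℤ)+1))/(2^(-(↑(s-2):ℤ)))⌋
                 ⌊((corner δ (l.get i)).1 + 2^(-(s:ℤ)+1))/(2^(-(↑(s-2):ℤ)))⌋ ×ˢ
               Finset.Icc ⌊((corner δ (l.get i)).2 - 2^(-(s:ℤ)+1))/(2^(-(↑(s-2):ℤ)))⌋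
                 ⌊((corner δ (l.get i)).2 + 2^(-(s:ℤ)+1))/(2^(-(↑(s-2):ℤ)))⌋ with hG
      have hmapG : ∀ j ∈ (Finset.univ.filter (fun j : Fin l.length => Δ ≤ dist (corner δ (l.get i)) (corner δ (l.get j)))).filter
          (fun j : Fin l.length => (2:ℝ)^(-(s:ℤ)) ≤ dist (corner δ (l.get i)) (corner δ (l.get j)) ∧ dist (corner δ (l.get i)) (corner δ (l.get j)) < 2^(-(s:ℤ)+1)),
          parQ S' (l.get j) ∈ G := by
        intro j hj
        have hdlt : dist (corner δ (l.get i)) (corner δ (l.get j)) < 2^(-(s:ℤ)+1) := ((Finset.mem_filter.mp hj).2).2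
        have hc1 : |(corner δ (l.get i)).1 - (corner δ (l.get j)).1| < 2^(-(s:ℤ)+1) := by
          have e := Prod.dist_eq (α := ℝ) (β := ℝ) (x := corner δ (l.get i)) (y := corner δ (l.get j))
          have : dist (corner δ (l.get i)).1 (corner δ (l.get j)).1 ≤ dist (corner δ (l.get i)) (corner δ (l.get j)) := by
            rw [e]; exact le_max_left _ _
          rw [Real.dist_eq] at this
          linarith
        have hc2 : |(corner δ (l.get i)).2 - (corner δ (l.get j)).2| < 2^(-(s:ℤ)+1) := by
          have e := Prod.dist_eq (α := ℝ) (β := ℝ) (x := corner δ (l.get i)) (y := corner δ (l.get j))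
          have : dist (corner δ (l.get i)).2 (corner δ (l.get j)).2 ≤ dist (corner δ (l.get i)) (corner δ (l.get j)) := by
            rw [e]; exact le_max_right _ _
          rw [Real.dist_eq] at this
          linarith
        have hmemρ : corner δ (l.get j) ∈ dSq ((S':ℝ)*δ) (parQ S' (l.get j)) :=
          dSq_subset_parQ hδ hS' _ (corner_mem hδ _)
        rw [hS'δ, mem_dSq'] at hmemρ
        rw [abs_lt] at hc1 hc2
        rw [hG, Finset.mem_product]
        constructor
        · rw [Finset.mem_Icc]
          constructor
          · have hlt : ((corner δ (l.get i)).1 - 2^(-(s:ℤ)+1))/(2^(-(↑(s-2):ℤ))) <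
                ((parQ S' (l.get j)).1 : ℝ) + 1 := by
              rw [div_lt_iff₀ hρpos]
              nlinarith [hmemρ.1.2, hc1.1, hc1.2, hρpos]
            have hfl := Int.floor_le (((corner δ (l.get i)).1 - 2^(-(s:ℤ)+1))/(2^(-(↑(s-2):ℤ))))
            have : ((⌊((corner δ (l.get i)).1 - 2^(-(s:ℤ)+1))/(2^(-(↑(s-2):ℤ)))⌋ : ℤ) : ℝ) <
                ((parQ S' (l.get j)).1 : ℝ) + 1 := lt_of_le_of_lt hfl hlt
            have : (⌊((corner δ (l.get i)).1 - 2^(-(s:ℤ)+1))/(2^(-(↑(s-2):ℤ)))⌋ : ℤ) <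
                (parQ S' (l.get j)).1 + 1 := by exact_mod_cast this
            omega
          · apply Int.le_floor.mpr
            rw [le_div_iff₀ hρpos]
            nlinarith [hmemρ.1.1, hc1.1, hc1.2]
        · rw [Finset.mem_Icc]
          constructor
          · have hlt : ((corner δ (l.get i)).2 - 2^(-(s:ℤ)+1))/(2^(-(↑(s-2):ℤ))) <
                ((parQ S' (l.get j)).2 : ℝ) + 1 := by
              rw [div_lt_iff₀ hρpos]
              nlinarith [hmemρ.2.2, hc2.1, hc2.2, hρpos]
            have hfl := Int.floor_le (((corner δ (l.get i)).2 - 2^(-(s:ℤ)+1))/(2^(-(↑(s-2):ℤ))))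
            have : ((⌊((corner δ (l.get i)).2 - 2^(-(s:ℤ)+1))/(2^(-(↑(s-2):ℤ)))⌋ : ℤ) : ℝ) <
                ((parQ S' (l.get j)).2 : ℝ) + 1 := lt_of_le_of_lt hfl hlt
            have : (⌊((corner δ (l.get i)).2 - 2^(-(s:ℤ)+1))/(2^(-(↑(s-2):ℤ)))⌋ : ℤ) <
                (parQ S' (l.get j)).2 + 1 := by exact_mod_cast this
            omega
          · apply Int.le_floor.mpr
            rw [le_div_iff₀ hρpos]
            nlinarith [hmemρ.2.1, hc2.1, hc2.2]
      have haxis : ∀ u : ℝ, ((Finset.Icc ⌊(u - 2^(-(s:ℤ)+1))/(2^(-(↑(s-2):ℤ)))⌋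
          ⌊(u + 2^(-(s:ℤ)+1))/(2^(-(↑(s-2):ℤ)))⌋).card : ℝ) ≤ 4 := by
        intro u
        apply card_Icc_le_real
        · have l1 : (⌊(u + 2^(-(s:ℤ)+1))/(2^(-(↑(s-2):ℤ)))⌋ : ℝ) ≤
              (u + 2^(-(s:ℤ)+1))/(2^(-(↑(s-2):ℤ))) := Int.floor_le _
          have l2 : (u - 2^(-(s:ℤ)+1))/(2^(-(↑(s-2):ℤ))) - 1 ≤
              (⌊(u - 2^(-(s:ℤ)+1))/(2^(-(↑(s-2):ℤ)))⌋ : ℝ) := by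
            linarith [Int.lt_floor_add_one ((u - 2^(-(s:ℤ)+1))/(2^(-(↑(s-2):ℤ))))]
          have l3 : (u + 2^(-(s:ℤ)+1))/(2^(-(↑(s-2):ℤ))) -
              (u - 2^(-(s:ℤ)+1))/(2^(-(↑(s-2):ℤ))) ≤ 2 := by
            rw [div_sub_div_same]
            rw [div_le_iff₀ hρpos]
            linarith [hRρ]
          linarith
        · norm_num
      have hcardG : (G.card : ℝ) ≤ 16 := by
        rw [hG, Finset.card_product]
        push_cast
        have e1 := haxis ((corner δ (l.get i)).1)
        have e2 := haxis ((corner δ (l.get i)).2)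
        have n1 : (0:ℝ) ≤ ((Finset.Icc ⌊((corner δ (l.get i)).1 - 2^(-(s:ℤ)+1))/(2^(-(↑(s-2):ℤ)))⌋ ⌊((corner δ (l.get i)).1 + 2^(-(s:ℤ)+1))/(2^(-(↑(s-2):ℤ)))⌋).card : ℝ) := by positivity
        have n2 : (0:ℝ) ≤ ((Finset.Icc ⌊((corner δ (l.get i)).2 - 2^(-(s:ℤ)+1))/(2^(-(↑(s-2):ℤ)))⌋ ⌊((corner δ (l.get i)).2 + 2^(-(s:ℤ)+1))/(2^(-(↑(s-2):ℤ)))⌋).card : ℝ) := by positivity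
        nlinarith [e1, e2, n1, n2]
      have hfiltermc : ∀ QQ : ℤ × ℤ,
          ((((Finset.univ.filter (fun j : Fin l.length => Δ ≤ dist (corner δ (l.get i)) (corner δ (l.get j)))).filter
            (fun j : Fin l.length => (2:ℝ)^(-(s:ℤ)) ≤ dist (corner δ (l.get i)) (corner δ (l.get j)) ∧ dist (corner δ (l.get i)) (corner δ (l.get j)) < 2^(-(s:ℤ)+1))).filter
            (fun j => parQ S' (l.get j) = QQ)).card : ℝ) ≤
            K * 2^(-(↑(s-2):ℤ)) * (l.length : ℝ) := by
        intro QQ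
        rcases (((Finset.univ.filter (fun j : Fin l.length => Δ ≤ dist (corner δ (l.get i)) (corner δ (l.get j)))).filter
            (fun j : Fin l.length => (2:ℝ)^(-(s:ℤ)) ≤ dist (corner δ (l.get i)) (corner δ (l.get j)) ∧ dist (corner δ (l.get i)) (corner δ (l.get j)) < 2^(-(s:ℤ)+1))).filter
            (fun j => parQ S' (l.get j) = QQ)).eq_empty_or_nonempty with hFe | hne
        · rw [hFe]
          simp only [Finset.card_empty, Nat.cast_zero]
          positivity
        · obtain ⟨j0, hj0⟩ := hne
          have hsub0 : dSq δ (l.get j0) ⊆ dSq (2^(-(↑(s-2):ℤ))) QQ := by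
            have hp := (Finset.mem_filter.mp hj0).2
            rw [← hp, ← hS'δ]
            exact dSq_subset_parQ hδ hS' _
          have hsubflt : (((Finset.univ.filter (fun j : Fin l.length => Δ ≤ dist (corner δ (l.get i)) (corner δ (l.get j)))).filter
              (fun j : Fin l.length => (2:ℝ)^(-(s:ℤ)) ≤ dist (corner δ (l.get i)) (corner δ (l.get j)) ∧ dist (corner δ (l.get i)) (corner δ (l.get j)) < 2^(-(s:ℤ)+1))).filter
              (fun j => parQ S' (l.get j) = QQ)) ⊆
              Finset.univ.filter (fun j : Fin l.length =>
                dSq δ (l.get j) ⊆ dSq (2^(-(↑(s-2):ℤ))) QQ) := by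
            intro j hj
            have hp := (Finset.mem_filter.mp hj).2
            refine Finset.mem_filter.mpr ⟨Finset.mem_univ _, ?_⟩
            rw [← hp, ← hS'δ]
            exact dSq_subset_parQ hδ hS' _
          have hcardeq : ((Finset.univ.filter (fun j : Fin l.length =>
              dSq δ (l.get j) ⊆ dSq (2^(-(↑(s-2):ℤ))) QQ)).card : ℝ) =
              (mCount δ P (dSq (2^(-(↑(s-2):ℤ))) QQ) : ℝ) := by
            rw [hcnt (dSq (2^(-(↑(s-2):ℤ))) QQ), Finset.sum_boole]
          have hnonempty : (dSq (2^(-(↑(s-2):ℤ))) QQ ∩ mUnion δ P).Nonempty :=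
            ⟨corner δ (l.get j0), hsub0 (corner_mem hδ _), hsubU j0 (corner_mem hδ _)⟩
          calc ((((Finset.univ.filter (fun j : Fin l.length => Δ ≤ dist (corner δ (l.get i)) (corner δ (l.get j)))).filter
              (fun j : Fin l.length => (2:ℝ)^(-(s:ℤ)) ≤ dist (corner δ (l.get i)) (corner δ (l.get j)) ∧ dist (corner δ (l.get i)) (corner δ (l.get j)) < 2^(-(s:ℤ)+1))).filter
              (fun j => parQ S' (l.get j) = QQ)).card : ℝ)
              ≤ ((Finset.univ.filter (fun j : Fin l.length =>
                dSq δ (l.get j) ⊆ dSq (2^(-(↑(s-2):ℤ))) QQ)).card : ℝ) := by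
                exact_mod_cast Finset.card_le_card hsubflt
            _ = (mCount δ P (dSq (2^(-(↑(s-2):ℤ))) QQ) : ℝ) := hcardeq
            _ ≤ K * 2^(-(↑(s-2):ℤ)) * (Multiset.card P : ℝ) :=
                hReg (s-2) _ rfl hΔρ hρ1 QQ hnonempty
            _ = K * 2^(-(↑(s-2):ℤ)) * (l.length : ℝ) := by rw [hcardP]
      have hcover : (((Finset.univ.filter (fun j : Fin l.length => Δ ≤ dist (corner δ (l.get i)) (corner δ (l.get j)))).filter
          (fun j : Fin l.length => (2:ℝ)^(-(s:ℤ)) ≤ dist (corner δ (l.get i)) (corner δ (l.get j)) ∧ dist (corner δ (l.get i)) (corner δ (l.get j)) < 2^(-(s:ℤ)+1))).card : ℝ) ≤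
          16 * (K * 2^(-(↑(s-2):ℤ)) * (l.length : ℝ)) := by
        have hsubb : ((Finset.univ.filter (fun j : Fin l.length => Δ ≤ dist (corner δ (l.get i)) (corner δ (l.get j)))).filter
            (fun j : Fin l.length => (2:ℝ)^(-(s:ℤ)) ≤ dist (corner δ (l.get i)) (corner δ (l.get j)) ∧ dist (corner δ (l.get i)) (corner δ (l.get j)) < 2^(-(s:ℤ)+1))) ⊆
            G.biUnion (fun QQ => ((Finset.univ.filter (fun j : Fin l.length => Δ ≤ dist (corner δ (l.get i)) (corner δ (l.get j)))).filter
              (fun j : Fin l.length => (2:ℝ)^(-(s:ℤ)) ≤ dist (corner δ (l.get i)) (corner δ (l.get j)) ∧ dist (corner δ (l.get i)) (corner δ (l.get j)) < 2^(-(s:ℤ)+1))).filter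
              (fun j => parQ S' (l.get j) = QQ)) := by
          intro j hj
          exact Finset.mem_biUnion.mpr ⟨parQ S' (l.get j), hmapG j hj,
            Finset.mem_filter.mpr ⟨hj, rfl⟩⟩
        have h1 := (Finset.card_le_card hsubb).trans Finset.card_biUnion_le
        have h2 : ((((Finset.univ.filter (fun j : Fin l.length => Δ ≤ dist (corner δ (l.get i)) (corner δ (l.get j)))).filter
            (fun j : Fin l.length => (2:ℝ)^(-(s:ℤ)) ≤ dist (corner δ (l.get i)) (corner δ (l.get j)) ∧ dist (corner δ (l.get i)) (corner δ (l.get j)) < 2^(-(s:ℤ)+1))).card : ℕ) : ℝ) ≤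
            ∑ QQ ∈ G, ((((Finset.univ.filter (fun j : Fin l.length => Δ ≤ dist (corner δ (l.get i)) (corner δ (l.get j)))).filter
              (fun j : Fin l.length => (2:ℝ)^(-(s:ℤ)) ≤ dist (corner δ (l.get i)) (corner δ (l.get j)) ∧ dist (corner δ (l.get i)) (corner δ (l.get j)) < 2^(-(s:ℤ)+1))).filter
              (fun j => parQ S' (l.get j) = QQ)).card : ℝ) := by
          exact_mod_cast h1
        refine h2.trans ?_
        have h3 : ∑ QQ ∈ G, ((((Finset.univ.filter (fun j : Fin l.length => Δ ≤ dist (corner δ (l.get i)) (corner δ (l.get j)))).filter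
            (fun j : Fin l.length => (2:ℝ)^(-(s:ℤ)) ≤ dist (corner δ (l.get i)) (corner δ (l.get j)) ∧ dist (corner δ (l.get i)) (corner δ (l.get j)) < 2^(-(s:ℤ)+1))).filter
            (fun j => parQ S' (l.get j) = QQ)).card : ℝ) ≤
            ∑ _QQ ∈ G, K * 2^(-(↑(s-2):ℤ)) * (l.length : ℝ) :=
          Finset.sum_le_sum fun QQ _ => hfiltermc QQ
        refine h3.trans ?_
        rw [Finset.sum_const, nsmul_eq_mul]
        have hKN : (0:ℝ) ≤ K * 2^(-(↑(s-2):ℤ)) * (l.length : ℝ) := by positivity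
        nlinarith [hcardG, hKN]
      -- each term bound
      have hterm : (∑ j ∈ (Finset.univ.filter (fun j : Fin l.length => Δ ≤ dist (corner δ (l.get i)) (corner δ (l.get j)))).filter
          (fun j : Fin l.length => (2:ℝ)^(-(s:ℤ)) ≤ dist (corner δ (l.get i)) (corner δ (l.get j)) ∧ dist (corner δ (l.get i)) (corner δ (l.get j)) < 2^(-(s:ℤ)+1)),
          1 / dist (corner δ (l.get i)) (corner δ (l.get j))) ≤ (((Finset.univ.filter (fun j : Fin l.length => Δ ≤ dist (corner δ (l.get i)) (corner δ (l.get j)))).filter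
          (fun j : Fin l.length => (2:ℝ)^(-(s:ℤ)) ≤ dist (corner δ (l.get i)) (corner δ (l.get j)) ∧ dist (corner δ (l.get i)) (corner δ (l.get j)) < 2^(-(s:ℤ)+1))).card : ℝ) *
          (2:ℝ)^(s:ℤ) := by
        have hb1 : ∀ j ∈ (Finset.univ.filter (fun j : Fin l.length => Δ ≤ dist (corner δ (l.get i)) (corner δ (l.get j)))).filter
            (fun j : Fin l.length => (2:ℝ)^(-(s:ℤ)) ≤ dist (corner δ (l.get i)) (corner δ (l.get j)) ∧ dist (corner δ (l.get i)) (corner δ (l.get j)) < 2^(-(s:ℤ)+1)),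
            1 / dist (corner δ (l.get i)) (corner δ (l.get j)) ≤ (2:ℝ)^(s:ℤ) := by
          intro j hj
          have hlo : (2:ℝ)^(-(s:ℤ)) ≤ dist (corner δ (l.get i)) (corner δ (l.get j)) := ((Finset.mem_filter.mp hj).2).1
          have hd0 : (0:ℝ) < dist (corner δ (l.get i)) (corner δ (l.get j)) := lt_of_lt_of_le (by positivity) hlo
          rw [div_le_iff₀ hd0]
          have hone : (2:ℝ)^(s:ℤ) * 2^(-(s:ℤ)) = 1 := by
            rw [← zpow_add₀ (by norm_num : (2:ℝ) ≠ 0)]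
            simp
          calc (1:ℝ) = 2^(s:ℤ) * 2^(-(s:ℤ)) := hone.symm
            _ ≤ 2^(s:ℤ) * dist (corner δ (l.get i)) (corner δ (l.get j)) := by
                apply mul_le_mul_of_nonneg_left hlo (by positivity)
        have := Finset.sum_le_card_nsmul _ _ _ hb1
        rwa [nsmul_eq_mul] at this
      have hρ2s : (2:ℝ)^(-(↑(s-2):ℤ)) * 2^(s:ℤ) ≤ 4 := by
        rw [← zpow_add₀ (by norm_num : (2:ℝ) ≠ 0)]
        have : (-(↑(s-2):ℤ) + s) ≤ 2 := by omega
        calc (2:ℝ)^(-(↑(s-2):ℤ) + (s:ℤ)) ≤ 2^(2:ℤ) := zpow_le_zpow_right₀ h12.le this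
          _ = 4 := by norm_num
      refine hterm.trans ?_
      calc (((Finset.univ.filter (fun j : Fin l.length => Δ ≤ dist (corner δ (l.get i)) (corner δ (l.get j)))).filter
          (fun j : Fin l.length => (2:ℝ)^(-(s:ℤ)) ≤ dist (corner δ (l.get i)) (corner δ (l.get j)) ∧ dist (corner δ (l.get i)) (corner δ (l.get j)) < 2^(-(s:ℤ)+1))).card : ℝ) *
          (2:ℝ)^(s:ℤ)
          ≤ 16 * (K * 2^(-(↑(s-2):ℤ)) * (l.length : ℝ)) * (2:ℝ)^(s:ℤ) := by
            apply mul_le_mul_of_nonneg_right hcover (by positivity)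
        _ = 16 * K * (l.length : ℝ) * ((2:ℝ)^(-(↑(s-2):ℤ)) * 2^(s:ℤ)) := by ring
        _ ≤ 16 * K * (l.length : ℝ) * 4 := by
            apply mul_le_mul_of_nonneg_left hρ2s (by positivity)
        _ = 64 * K * (l.length : ℝ) := by ring
    -- cover by annuli
    have hsubA : (Finset.univ.filter (fun j : Fin l.length => Δ ≤ dist (corner δ (l.get i)) (corner δ (l.get j)))) ⊆
        (Finset.Icc 1 m).biUnion (fun s =>
          (Finset.univ.filter (fun j : Fin l.length => Δ ≤ dist (corner δ (l.get i)) (corner δ (l.get j)))).filter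
          (fun j : Fin l.length => (2:ℝ)^(-(s:ℤ)) ≤ dist (corner δ (l.get i)) (corner δ (l.get j)) ∧ dist (corner δ (l.get i)) (corner δ (l.get j)) < 2^(-(s:ℤ)+1))) := by
      intro j hj
      have hdj : Δ ≤ dist (corner δ (l.get i)) (corner δ (l.get j)) := (Finset.mem_filter.mp hj).2
      obtain ⟨s, hs1, hsm, hslo, hshi⟩ := annulus_find hΔeq hdj (hdist1 i j)
      exact Finset.mem_biUnion.mpr ⟨s, Finset.mem_Icc.mpr ⟨hs1, hsm⟩,
        Finset.mem_filter.mpr ⟨hj, hslo, hshi⟩⟩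
    have hdisj : (↑(Finset.Icc 1 m) : Set ℕ).PairwiseDisjoint (fun s =>
        (Finset.univ.filter (fun j : Fin l.length => Δ ≤ dist (corner δ (l.get i)) (corner δ (l.get j)))).filter
        (fun j : Fin l.length => (2:ℝ)^(-(s:ℤ)) ≤ dist (corner δ (l.get i)) (corner δ (l.get j)) ∧ dist (corner δ (l.get i)) (corner δ (l.get j)) < 2^(-(s:ℤ)+1))) := by
      intro s _ s' _ hss
      refine Finset.disjoint_left.mpr fun j hj hj' => ?_
      have e1 := (Finset.mem_filter.mp hj).2
      have e2 := (Finset.mem_filter.mp hj').2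
      rcases lt_or_gt_of_ne hss with hlt | hlt
      · have : (2:ℝ)^(-(s':ℤ)+1) ≤ 2^(-(s:ℤ)) := zpow_le_zpow_right₀ h12.le (by omega)
        linarith [e1.1, e2.2]
      · have : (2:ℝ)^(-(s:ℤ)+1) ≤ 2^(-(s':ℤ)) := zpow_le_zpow_right₀ h12.le (by omega)
        linarith [e1.2, e2.1]
    have hsum1 : (∑ j ∈ Finset.univ.filter (fun j : Fin l.length => Δ ≤ dist (corner δ (l.get i)) (corner δ (l.get j))), 1 / dist (corner δ (l.get i)) (corner δ (l.get j))) ≤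
        ∑ s ∈ Finset.Icc 1 m, ∑ j ∈ (Finset.univ.filter
          (fun j : Fin l.length => Δ ≤ dist (corner δ (l.get i)) (corner δ (l.get j)))).filter
          (fun j : Fin l.length => (2:ℝ)^(-(s:ℤ)) ≤ dist (corner δ (l.get i)) (corner δ (l.get j)) ∧ dist (corner δ (l.get i)) (corner δ (l.get j)) < 2^(-(s:ℤ)+1)), 1 / dist (corner δ (l.get i)) (corner δ (l.get j)) := by
      rw [← Finset.sum_biUnion hdisj]
      apply Finset.sum_le_sum_of_subset_of_nonneg hsubA
      intro j _ _
      positivity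
    refine hsum1.trans ?_
    have hsum2 := Finset.sum_le_sum hscale
    refine hsum2.trans ?_
    rw [Finset.sum_const, nsmul_eq_mul, Nat.card_Icc]
    have : ((m + 1 - 1 : ℕ) : ℝ) = (m : ℝ) := by push_cast; ring
    rw [this]
    ring_nf
    exact le_refl _
  -- log identity
  have hlog : Real.log Δ⁻¹ = (m:ℝ) * Real.log 2 := by
    rw [hΔeq, ← zpow_neg, neg_neg, Real.log_zpow]
    push_cast
    ring
  have hb2 : (0:ℝ) < b ^ 2 := by positivity
  -- PART 1
  have part1 : ∀ T : Finset (ℤ × ℤ),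
      (∀ t ∈ T, tubeIdx δ t ∧ 2 ≤ (NCount6 δ Δ P b t : ℝ)) →
      (∑ t ∈ T, ((NCount6 δ Δ P b t : ℝ)) ^ 2) ≤
        1000000 * K * Real.log Δ⁻¹ * (Multiset.card P : ℝ) ^ 2 / b ^ 2 := by
    intro T hT
    have hTidx : ∀ t ∈ T, tubeIdx δ t := fun t ht => (hT t ht).1
    have e1 : ∀ t ∈ T, ((NCount6 δ Δ P b t : ℝ)) ^ 2 ≤
        (2 / b ^ 2) * ∑ i : Fin l.length, ∑ j : Fin l.length, (if (dSq δ (l.get i) ⊆ nbTube 6 δ t ∧ dSq δ (l.get j) ⊆ nbTube 6 δ t ∧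
          parQ S (l.get i) ≠ parQ S (l.get j)) then (1:ℝ) else 0) := by
      intro t ht
      have hk := key1 t (hT t ht).2
      rw [div_mul_eq_mul_div, le_div_iff₀ hb2]
      linarith [hk]
    have e2 : (∑ t ∈ T, ((NCount6 δ Δ P b t : ℝ)) ^ 2) ≤
        (2 / b ^ 2) * ∑ t ∈ T, ∑ i : Fin l.length, ∑ j : Fin l.length, (if (dSq δ (l.get i) ⊆ nbTube 6 δ t ∧ dSq δ (l.get j) ⊆ nbTube 6 δ t ∧
          parQ S (l.get i) ≠ parQ S (l.get j)) then (1:ℝ) else 0) := by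
      rw [Finset.mul_sum]
      exact Finset.sum_le_sum e1
    have e3 : (∑ t ∈ T, ∑ i : Fin l.length, ∑ j : Fin l.length, (if (dSq δ (l.get i) ⊆ nbTube 6 δ t ∧ dSq δ (l.get j) ⊆ nbTube 6 δ t ∧
          parQ S (l.get i) ≠ parQ S (l.get j)) then (1:ℝ) else 0))
        = ∑ i : Fin l.length, ∑ j : Fin l.length, ∑ t ∈ T, (if (dSq δ (l.get i) ⊆ nbTube 6 δ t ∧ dSq δ (l.get j) ⊆ nbTube 6 δ t ∧
          parQ S (l.get i) ≠ parQ S (l.get j)) then (1:ℝ) else 0) := by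
      rw [Finset.sum_comm]
      exact Finset.sum_congr rfl fun i _ => Finset.sum_comm
    have e4 : (∑ i : Fin l.length, ∑ j : Fin l.length, ∑ t ∈ T, (if (dSq δ (l.get i) ⊆ nbTube 6 δ t ∧ dSq δ (l.get j) ⊆ nbTube 6 δ t ∧
          parQ S (l.get i) ≠ parQ S (l.get j)) then (1:ℝ) else 0)) ≤
        ∑ i : Fin l.length, ∑ j : Fin l.length, 4515 * (if Δ ≤ dist (corner δ (l.get i)) (corner δ (l.get j)) then
          1 / dist (corner δ (l.get i)) (corner δ (l.get j)) else 0) :=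
      Finset.sum_le_sum fun i _ => Finset.sum_le_sum fun j _ => key2 T hTidx i j
    have e5 : (∑ i : Fin l.length, ∑ j : Fin l.length, 4515 * (if Δ ≤ dist (corner δ (l.get i)) (corner δ (l.get j)) then
          1 / dist (corner δ (l.get i)) (corner δ (l.get j)) else 0)) ≤
        (l.length : ℝ) * (4515 * (64 * K * (m:ℝ) * (l.length : ℝ))) := by
      have e5a : ∀ i : Fin l.length, (∑ j : Fin l.length, 4515 * (if Δ ≤ dist (corner δ (l.get i)) (corner δ (l.get j)) then
          1 / dist (corner δ (l.get i)) (corner δ (l.get j)) else 0)) ≤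
          4515 * (64 * K * (m:ℝ) * (l.length : ℝ)) := by
        intro i
        rw [← Finset.mul_sum]
        exact mul_le_mul_of_nonneg_left (key3 i) (by norm_num)
      have := Finset.sum_le_card_nsmul Finset.univ _ _ (fun i _ => e5a i)
      rw [nsmul_eq_mul] at this
      simpa using this
    have etot : (∑ t ∈ T, ((NCount6 δ Δ P b t : ℝ)) ^ 2) ≤
        (2 / b ^ 2) * ((l.length : ℝ) * (4515 * (64 * K * (m:ℝ) * (l.length : ℝ)))) := by
      calc (∑ t ∈ T, ((NCount6 δ Δ P b t : ℝ)) ^ 2)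
          ≤ (2 / b ^ 2) * ∑ t ∈ T, ∑ i : Fin l.length, ∑ j : Fin l.length, (if (dSq δ (l.get i) ⊆ nbTube 6 δ t ∧ dSq δ (l.get j) ⊆ nbTube 6 δ t ∧
          parQ S (l.get i) ≠ parQ S (l.get j)) then (1:ℝ) else 0) := e2
        _ = (2 / b ^ 2) * (∑ i : Fin l.length, ∑ j : Fin l.length, ∑ t ∈ T, (if (dSq δ (l.get i) ⊆ nbTube 6 δ t ∧ dSq δ (l.get j) ⊆ nbTube 6 δ t ∧
          parQ S (l.get i) ≠ parQ S (l.get j)) then (1:ℝ) else 0)) := by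
            rw [e3]
        _ ≤ _ := by
            apply mul_le_mul_of_nonneg_left _ (by positivity)
            exact e4.trans e5
    refine etot.trans ?_
    rw [hlog, hcardP]
    have hnum : 2 * ((l.length : ℝ) * (4515 * (64 * K * (m:ℝ) * (l.length : ℝ)))) ≤
        1000000 * K * ((m:ℝ) * Real.log 2) * (l.length : ℝ) ^ 2 := by
      have hlg := Real.log_two_gt_d9
      have base : (577920:ℝ) ≤ 1000000 * Real.log 2 := by nlinarith [hlg]
      calc 2 * ((l.length : ℝ) * (4515 * (64 * K * (m:ℝ) * (l.length : ℝ))))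
          = 577920 * (K * ((m:ℝ) * (l.length : ℝ) ^ 2)) := by ring
        _ ≤ (1000000 * Real.log 2) * (K * ((m:ℝ) * (l.length : ℝ) ^ 2)) := by
            apply mul_le_mul_of_nonneg_right base (by positivity)
        _ = 1000000 * K * ((m:ℝ) * Real.log 2) * (l.length : ℝ) ^ 2 := by ring
    rw [div_mul_eq_mul_div]
    gcongr
  refine ⟨part1, ?_⟩
  -- PART 2
  intro a T ha hTidx _hvol hrich
  have ha0 : (0:ℝ) < a := lt_of_lt_of_le two_pos ha
  have hTcond : ∀ t ∈ T, tubeIdx δ t ∧ 2 ≤ (NCount6 δ Δ P b t : ℝ) :=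
    fun t ht => ⟨hTidx t ht, le_trans ha (hrich t ht)⟩
  have h1 := part1 T hTcond
  have h2 : (T.card : ℝ) * a ^ 2 ≤ ∑ t ∈ T, ((NCount6 δ Δ P b t : ℝ)) ^ 2 := by
    have hterm : ∀ t ∈ T, a ^ 2 ≤ ((NCount6 δ Δ P b t : ℝ)) ^ 2 := by
      intro t ht
      exact pow_le_pow_left₀ ha0.le (hrich t ht) 2
    have := Finset.card_nsmul_le_sum T _ _ hterm
    rwa [nsmul_eq_mul] at this
  have ha2 : (0:ℝ) < a ^ 2 := by positivity
  have h3 : (T.card : ℝ) ≤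
      (1000000 * K * Real.log Δ⁻¹ * (Multiset.card P : ℝ) ^ 2 / b ^ 2) / a ^ 2 := by
    rw [le_div_iff₀ ha2]
    linarith [h1, h2]
  refine h3.trans (le_of_eq ?_)
  rw [div_div, show b ^ 2 * a ^ 2 = (a * b) ^ 2 from by ring]

end
end
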